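/- For the complex 3-dimensional Heisenberg Lie algebra with basis X, Y, Z and only nonzero bracket [X,Z] = Y (up to sign), for any Hermitian form h ∈ Sym^{1,1}(g) the square h# is a nonnegative multiple of Y⊗Ȳ; in particular (h#)# = 0, and the ODE ∂_t h = h# has the explicit global solution h(t) = h₀ + t·h₀#, which grows linearly in t. -/

import Mathlib

open scoped BigOperators ComplexConjugate

/-- The coordinate form of the `#` operation on `Sym^{1,1}(g)` for a complex Lie algebra
`g` (Hermitian elements of `g ⊗ ḡ` being recorded by their coefficient matrices `h^{αβ}`
in a chosen basis): `(h#k)^{αβ} = c^α_{εδ} conj(c^β_{γθ}) h^{εγ} k^{δθ}`, where `c` are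
the structure constants.  On pure tensors this is
`(v₁ ⊗ v̄₂) # (w₁ ⊗ w̄₂) = ⁅v₁, w₁⁆ ⊗ conj ⁅v₂, w₂⁆`. -/
noncomputable def sharpMatC {ι : Type*} [Fintype ι] (c : ι → ι → ι → ℂ) (h k : ι → ι → ℂ) : ι → ι → ℂ :=
  fun α β => ∑ ε, ∑ δ, ∑ γ, ∑ θ, c ε δ α * conj (c γ θ β) * h ε γ * k δ θ

/-- The quadratic square `h# = (1/2) h # h`. -/
noncomputable def sharpSqC {ι : Type*} [Fintype ι] (c : ι → ι → ι → ℂ) (h : ι → ι → ℂ) :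
    ι → ι → ℂ :=
  fun α β => (1 / 2 : ℂ) * sharpMatC c h h α β

/-- Evaluation of a Hermitian form `h ∈ Sym^{1,1}(g)` on a functional `ξ ∈ g*`
(given by coordinates): `h(ξ, ξ̄) = Σ ξ_α conj(ξ_β) h^{αβ}`. -/
noncomputable def quadC {ι : Type*} [Fintype ι] (h : ι → ι → ℂ) (ξ : ι → ℂ) : ℂ :=
  ∑ α, ∑ β, ξ α * conj (ξ β) * h α β

/-- A coefficient matrix is Hermitian. -/
def HermMatC {ι : Type*} (h : ι → ι → ℂ) : Prop := ∀ α β, h α β = conj (h β α)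

/-- Positive semidefiniteness of a Hermitian form on `g*`. -/
def PosSemidefC {ι : Type*} [Fintype ι] (h : ι → ι → ℂ) : Prop :=
  ∀ ξ : ι → ℂ, 0 ≤ (quadC h ξ).re

/-- Positive definiteness of a Hermitian form on `g*`. -/
def PosDefC {ι : Type*} [Fintype ι] (h : ι → ι → ℂ) : Prop :=
  ∀ ξ : ι → ℂ, ξ ≠ 0 → 0 < (quadC h ξ).re

/-- Structure constants of a complex Lie algebra relative to a basis. -/
noncomputable def structConstC {ι : Type*} [Fintype ι] (L : Type*) [LieRing L] [LieAlgebra ℂ L]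
    (b : Module.Basis ι ℂ L) : ι → ι → ι → ℂ :=
  fun i j k => b.repr ⁅b i, b j⁆ k

/-- The structure constants of the 3-dimensional complex Heisenberg Lie algebra in the
basis `X = e₀, Y = e₁, Z = e₂`, with only nonzero bracket `⁅X, Z⁆ = Y`. -/
def heisenbergC : Fin 3 → Fin 3 → Fin 3 → ℂ := fun i j k =>
  if i = 0 ∧ j = 2 ∧ k = 1 then 1 else if i = 2 ∧ j = 0 ∧ k = 1 then -1 else 0

open Matrix
open scoped ComplexOrder

/-! On the `{X, Z}` block the Heisenberg bracket is the determinant pairing, so `h#` is the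
principal minor `h^{XX} h^{ZZ} - |h^{XZ}|²` times `Y ⊗ Ȳ`; this minor is nonnegative for positive
semidefinite `h`. As `Y` is central, `h#` only sees the `{X, Z}` block of `h`, where `Y ⊗ Ȳ`
vanishes: hence `(h#)# = 0` and `h#` is constant along `h + t • h#`. -/

lemma quadC_star {ι : Type*} [Fintype ι] (h : ι → ι → ℂ) (x : ι → ℂ) :
    quadC h (star x) = star x ⬝ᵥ (Matrix.of h *ᵥ x) := by
  simp only [quadC, dotProduct, mulVec, Finset.mul_sum, Pi.star_apply, of_apply,
    starRingEnd_apply, star_star]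
  exact Finset.sum_congr rfl fun _ _ => Finset.sum_congr rfl fun _ _ => by ring

lemma posSemidef_of_hermMatC {ι : Type*} [Fintype ι] {h : ι → ι → ℂ} (hherm : HermMatC h)
    (hpsd : PosSemidefC h) : (Matrix.of h).PosSemidef := by
  have hH : (Matrix.of h).IsHermitian := by
    ext i j
    exact (hherm i j).symm
  refine PosSemidef.of_dotProduct_mulVec_nonneg hH fun x => Complex.nonneg_iff.2 ⟨?_, ?_⟩
  · simpa only [quadC_star] using hpsd (star x)
  · exact (hH.im_star_dotProduct_mulVec_self x).symm

lemma Matrix.PosSemidef.principalMinor_two_nonneg {ι 𝕜 : Type*} [Fintype ι] [RCLike 𝕜]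
    {M : Matrix ι ι 𝕜} (hM : M.PosSemidef) (i j : ι) : 0 ≤ M i i * M j j - M i j * M j i := by
  classical
  have := (hM.submatrix ![i, j]).det_nonneg
  rwa [det_fin_two] at this

lemma heisenbergC_sharpSq_eq (g : Fin 3 → Fin 3 → ℂ) :
    sharpSqC heisenbergC g = fun α β =>
      if α = 1 ∧ β = 1 then g 0 0 * g 2 2 - g 0 2 * g 2 0 else 0 := by
  funext α β
  fin_cases α <;> fin_cases β <;>
    simp [sharpSqC, sharpMatC, heisenbergC, Fin.sum_univ_three]; ring

lemma heisenbergC_sharpSq_sharpSq (g : Fin 3 → Fin 3 → ℂ) :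
    sharpSqC heisenbergC (sharpSqC heisenbergC g) = 0 := by
  funext α β
  simp [heisenbergC_sharpSq_eq]

lemma heisenbergC_sharpSq_add_smul_sharpSq (g k : Fin 3 → Fin 3 → ℂ) (t : ℝ) :
    sharpSqC heisenbergC (g + t • sharpSqC heisenbergC k) = sharpSqC heisenbergC g := by
  funext α β
  simp [heisenbergC_sharpSq_eq]

/-- for the complex Heisenberg Lie algebra with basis `X, Y, Z` and only
nonzero bracket `⁅X, Z⁆ = Y`, for any (positive semidefinite) Hermitian form
`h ∈ Sym^{1,1}(g)` the square `h#` is a nonnegative multiple of `Y ⊗ Ȳ`; in particular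
`(h#)# = 0`, and the ODE `∂ₜ h = h#` has the explicit global solution
`h(t) = h₀ + t • h₀#`, which grows linearly in `t`. -/
theorem heisenberg_sharpSq (h : Fin 3 → Fin 3 → ℂ)
    (hherm : HermMatC h) (hpsd : PosSemidefC h) :
    (∃ μ : ℝ, 0 ≤ μ ∧
        sharpSqC heisenbergC h = fun α β => if α = 1 ∧ β = 1 then (μ : ℂ) else 0) ∧
      sharpSqC heisenbergC (sharpSqC heisenbergC h) = 0 ∧
      ∀ t : ℝ, HasDerivAt (fun s : ℝ => h + s • sharpSqC heisenbergC h)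
        (sharpSqC heisenbergC (h + t • sharpSqC heisenbergC h)) t := by
  have hminor : 0 ≤ h 0 0 * h 2 2 - h 0 2 * h 2 0 :=
    (posSemidef_of_hermMatC hherm hpsd).principalMinor_two_nonneg 0 2
  refine ⟨⟨_, (Complex.nonneg_iff.1 hminor).1, ?_⟩, heisenbergC_sharpSq_sharpSq h, fun t => ?_⟩
  · rw [heisenbergC_sharpSq_eq, ← Complex.eq_re_of_ofReal_le hminor]
  · rw [heisenbergC_sharpSq_add_smul_sharpSq]
    simpa using ((hasDerivAt_id t).smul_const (sharpSqC heisenbergC h)).const_add h
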